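/- arXiv:1608.03978 — 2 statements merged into one kernel-verified Lean document; each statement's English description precedes it below -/
import Mathlib

section
/- Let α ∈ ℝ, ℓ > 0, n a positive integer, and k₀ = nπ/ℓ. Let ℓ₁, ℓ₂ : ℝ → ℝ be differentiable with ℓ₁(0) = ℓ₂(0) = ℓ, and let k : ℝ → ℂ be differentiable with k(0) = k₀, such that F(k(t), t) = 0 for all t in a neighborhood of 0, where F(κ, t) := (α − 3iκ)² − (α − iκ)²·(e^{2iκℓ₁(t)} + e^{2iκℓ₂(t)}) + 8κ²·e^{iκ(ℓ₁(t)+ℓ₂(t))} + (α + iκ)²·e^{2iκ(ℓ₁(t)+ℓ₂(t))}. Then k′(0) = −(ℓ₁′(0) + ℓ₂′(0))·k₀/(2ℓ). -/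
open Complex Real

/-!
Put `z = e^{iκℓ₁}` and `w = e^{iκℓ₂}`. The resonance function is then the polynomial
`P(κ, z, w) = (α - 3iκ)² - (α - iκ)² (z² + w²) + 8κ² zw + (α + iκ)² z²w²`,
and `P(κ, s, s) = 0` identically in `κ` whenever `s² = 1`; at `t = 0` we have
`z = w = e^{inπ} = ±1`. Hence `∂_κ P` vanishes there and the derivative of
`t ↦ F(k(t), t)` at `0` only sees `z` and `w`: it equals
`8iκ(κ + iα)(2ℓ k'(0) + k₀ (ℓ₁'(0) + ℓ₂'(0)))`. Since `F(k(t), t) ≡ 0`, this vanishes, and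
`k₀ ≠ 0`, `k₀ + iα ≠ 0` (its real part is `k₀ > 0`) give the formula for `k'(0)`.
-/

noncomputable section

def loopResonance (α : ℝ) (κ : ℂ) (a b : ℝ) : ℂ :=
  ((α : ℂ) - 3 * I * κ) ^ 2
    - ((α : ℂ) - I * κ) ^ 2 * (exp (2 * I * κ * a) + exp (2 * I * κ * b))
    + 8 * κ ^ 2 * exp (I * κ * ((a : ℂ) + (b : ℂ)))
    + ((α : ℂ) + I * κ) ^ 2 * exp (2 * I * κ * ((a : ℂ) + (b : ℂ)))

def loopResonancePoly (α κ z w : ℂ) : ℂ :=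
  (α - 3 * I * κ) ^ 2 - (α - I * κ) ^ 2 * (z ^ 2 + w ^ 2) + 8 * κ ^ 2 * (z * w)
    + (α + I * κ) ^ 2 * (z * w) ^ 2

theorem loopResonance_eq_loopResonancePoly (α : ℝ) (κ : ℂ) (a b : ℝ) :
    loopResonance α κ a b = loopResonancePoly α κ (exp (I * κ * a)) (exp (I * κ * b)) := by
  have hsq : ∀ x : ℂ, exp x ^ 2 = exp (2 * x) := fun x => by rw [sq, ← Complex.exp_add, two_mul]
  simp only [loopResonance, loopResonancePoly, hsq, ← Complex.exp_add]
  ring_nf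

theorem hasDerivAt_loopResonancePoly (α : ℂ) {κ z w : ℝ → ℂ} {κ' z' w' s : ℂ} {t : ℝ}
    (hκ : HasDerivAt κ κ' t) (hz : HasDerivAt z z' t) (hw : HasDerivAt w w' t)
    (hzt : z t = s) (hwt : w t = s) (hs : s ^ 2 = 1) :
    HasDerivAt (fun t => loopResonancePoly α (κ t) (z t) (w t))
      (8 * κ t * (κ t + I * α) * s * (z' + w')) t := by
  have hP := ((((hκ.const_mul (3 * I)).const_sub α).pow 2).sub
    (((hκ.const_mul I).const_sub α).pow 2 |>.mul ((hz.pow 2).add (hw.pow 2)))).add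
    (((hκ.pow 2).const_mul 8).mul (hz.mul hw)) |>.add
    (((hκ.const_mul I).const_add α).pow 2 |>.mul ((hz.mul hw).pow 2))
  refine hP.congr_deriv ?_
  have hss : s * s = 1 := by rw [← sq, hs]
  simp only [Pi.mul_apply, Pi.pow_apply, Pi.add_apply, hzt, hwt, hss, hs]
  linear_combination (16 * κ t * κ') * I_sq

theorem hasDerivAt_cexp_I_mul_mul {κ : ℝ → ℂ} {a : ℝ → ℝ} {κ' : ℂ} {a' t : ℝ}
    (hκ : HasDerivAt κ κ' t) (ha : HasDerivAt a a' t) :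
    HasDerivAt (fun t => exp (I * κ t * a t))
      (exp (I * κ t * a t) * (I * (κ' * a t + κ t * a'))) t := by
  refine ((hκ.const_mul I).mul ha.ofReal_comp).cexp.congr_deriv ?_
  simp only [Pi.mul_apply]
  ring

theorem hasDerivAt_loopResonance (α : ℝ) {κ : ℝ → ℂ} {a b : ℝ → ℝ} {κ' : ℂ} {a' b' t : ℝ}
    (hκ : HasDerivAt κ κ' t) (ha : HasDerivAt a a' t) (hb : HasDerivAt b b' t)
    (hab : a t = b t) (hs : exp (I * κ t * a t) ^ 2 = 1) :
    HasDerivAt (fun t => loopResonance α (κ t) (a t) (b t))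
      (8 * I * κ t * (κ t + I * α) * (2 * a t * κ' + κ t * (a' + b'))) t := by
  have hP := hasDerivAt_loopResonancePoly α hκ (hasDerivAt_cexp_I_mul_mul hκ ha)
    (hasDerivAt_cexp_I_mul_mul hκ hb) rfl (by rw [hab]) hs
  simp only [← loopResonance_eq_loopResonancePoly] at hP
  refine hP.congr_deriv ?_
  rw [← hab]
  linear_combination (8 * I * κ t * (κ t + I * α) * (2 * a t * κ' + κ t * (a' + b'))) * hs

theorem cexp_I_mul_mul_sq_eq_one {κ a : ℝ} {n : ℕ} (h : κ * a = n * π) :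
    exp (I * κ * a) ^ 2 = 1 := by
  rw [← Complex.exp_nat_mul, ← Complex.exp_nat_mul_two_pi_mul_I n]
  congr 1
  have hC : (κ : ℂ) * a = n * π := by exact_mod_cast h
  push_cast
  linear_combination (2 * I) * hC

end

/-- For the loop graph with two leads and `δ`-couplings of the same strength `α`, if the
resonance pole `k(t)` satisfies the resonance condition `F(k(t), t) = 0` near `t = 0`
with `ℓ₁(0) = ℓ₂(0) = ℓ` and `k(0) = k₀ = nπ/ℓ`, then
`k'(0) = -(ℓ₁'(0) + ℓ₂'(0)) k₀ / (2ℓ)`. -/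
theorem stmt_12 (α : ℝ) (ℓ : ℝ) (hℓ : 0 < ℓ) (n : ℕ) (hn : 0 < n)
    (ℓ₁ ℓ₂ : ℝ → ℝ) (hℓ₁ : Differentiable ℝ ℓ₁) (hℓ₂ : Differentiable ℝ ℓ₂)
    (hℓ₁0 : ℓ₁ 0 = ℓ) (hℓ₂0 : ℓ₂ 0 = ℓ)
    (k : ℝ → ℂ) (hk : Differentiable ℝ k) (hk0 : k 0 = (n * Real.pi / ℓ : ℝ))
    (hF : ∀ᶠ t in nhds (0 : ℝ),
      ((α : ℂ) - 3 * Complex.I * k t) ^ 2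
        - ((α : ℂ) - Complex.I * k t) ^ 2
          * (Complex.exp (2 * Complex.I * k t * (ℓ₁ t))
            + Complex.exp (2 * Complex.I * k t * (ℓ₂ t)))
        + 8 * (k t) ^ 2 * Complex.exp (Complex.I * k t * ((ℓ₁ t : ℂ) + (ℓ₂ t : ℂ)))
        + ((α : ℂ) + Complex.I * k t) ^ 2
          * Complex.exp (2 * Complex.I * k t * ((ℓ₁ t : ℂ) + (ℓ₂ t : ℂ))) = 0) :
    deriv k 0 = -(((deriv ℓ₁ 0 + deriv ℓ₂ 0) * (n * Real.pi / ℓ) / (2 * ℓ) : ℝ) : ℂ) := by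
  set k₀ : ℝ := n * π / ℓ
  have hk₀ : 0 < k₀ := by positivity
  have hs : exp (I * k 0 * ℓ₁ 0) ^ 2 = 1 := by
    rw [hk0, hℓ₁0]
    exact cexp_I_mul_mul_sq_eq_one (div_mul_cancel₀ _ hℓ.ne')
  have hderiv := hasDerivAt_loopResonance α (hk 0).hasDerivAt (hℓ₁ 0).hasDerivAt (hℓ₂ 0).hasDerivAt
    (hℓ₁0.trans hℓ₂0.symm) hs
  have hzero : HasDerivAt (fun t => loopResonance α (k t) (ℓ₁ t) (ℓ₂ t)) 0 0 :=
    (hasDerivAt_const 0 0).congr_of_eventuallyEq hF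
  have hk₀α : (k₀ : ℂ) + I * α ≠ 0 := fun h => by
    simpa [hk₀.ne'] using congrArg re h
  have hlin : 2 * ℓ * deriv k 0 + k₀ * (deriv ℓ₁ 0 + deriv ℓ₂ 0) = 0 := by
    simpa [hk0, hℓ₁0, hk₀.ne', hk₀α] using hderiv.unique hzero
  have hℓC : (ℓ : ℂ) ≠ 0 := by exact_mod_cast hℓ.ne'
  push_cast
  field_simp
  linear_combination hlin
end

section
/- Let ℓ₁, ℓ₂ > 0 be real, β₁, β₂ ∈ ℝ, and k ∈ ℂ with k ≠ 0. There exists a nonzero tuple (a₁, b₁, a₂, b₂, c₁, c₂) ∈ ℂ⁶ satisfying the linear system: a₁ − b₁ = c₁, a₂ − b₂ = c₁, ikβ₁·c₁ = a₁ + b₁ + a₂ + b₂ + c₁, −a₁e^{ikℓ₁} + b₁e^{−ikℓ₁} = c₂, −a₂e^{ikℓ₂} + b₂e^{−ikℓ₂} = c₂, and ikβ₂·c₂ = a₁e^{ikℓ₁} + b₁e^{−ikℓ₁} + a₂e^{ikℓ₂} + b₂e^{−ikℓ₂} + c₂, if and only if [(β₁ + β₂)k + 2i]·sin(k(ℓ₁+ℓ₂))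 + 2·(1 − cos(kℓ₁)·cos(kℓ₂)) + (3 − β₁β₂k² − ik(β₁ + β₂))·sin(kℓ₁)·sin(kℓ₂) = 0. -/
/-!
Eliminating `c₁` and `c₂` leaves a homogeneous 4 × 4 system for `(a₁, b₁, a₂, b₂)`, which has a
nontrivial solution iff its determinant vanishes. Expanding the determinant and writing
`e^{±ikℓ} = cos kℓ ± i sin kℓ` gives four times the stated expression.
-/

open Complex Matrix

/-- With `p = ikβ₁`, `q = ikβ₂`, `Eⱼ = e^{ikℓⱼ}`, `Fⱼ = e^{-ikℓⱼ}`: the rows are the equality of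
derivatives and the coupling condition at the first vertex, then at the second, after substituting
`c₁ = a₁ - b₁` and `c₂ = -a₁E₁ + b₁F₁`. -/
def loopMatrix {K : Type*} [Ring K] (p q E₁ F₁ E₂ F₂ : K) : Matrix (Fin 4) (Fin 4) K :=
  !![1, -1, -1, 1;
     p - 2, -p, -1, -1;
     -E₁, F₁, E₂, -F₂;
     -(q * E₁), (q - 2) * F₁, -E₂, -F₂]

section LoopMatrix

variable {K : Type*} [CommRing K] (p q E₁ F₁ E₂ F₂ : K)

theorem loopMatrix_mulVec (v : Fin 4 → K) :
    loopMatrix p q E₁ F₁ E₂ F₂ *ᵥ v =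
      ![v 0 - v 1 - v 2 + v 3,
        (p - 2) * v 0 - p * v 1 - v 2 - v 3,
        -(E₁ * v 0) + F₁ * v 1 + E₂ * v 2 - F₂ * v 3,
        -(q * E₁ * v 0) + (q - 2) * F₁ * v 1 - E₂ * v 2 - F₂ * v 3] := by
  ext i
  fin_cases i <;> simp [loopMatrix, Matrix.mulVec, dotProduct, Fin.sum_univ_four] <;> ring

theorem det_loopMatrix :
    (loopMatrix p q E₁ F₁ E₂ F₂).det =
      4 * (E₁ * F₁ + E₂ * F₂) + (p - 1) * (q - 1) * (E₁ * F₂ + F₁ * E₂)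
        - (p + 1) * (q + 1) * (E₁ * E₂) - (p - 3) * (q - 3) * (F₁ * F₂) := by
  rw [Matrix.det_succ_row_zero]
  simp [Fin.sum_univ_succ, Matrix.det_fin_three, Fin.succAbove, loopMatrix]
  ring

theorem exists_loop_solution_iff_det_loopMatrix_eq_zero [IsDomain K] :
    (∃ a₁ b₁ a₂ b₂ c₁ c₂ : K,
      (a₁, b₁, a₂, b₂, c₁, c₂) ≠ (0, 0, 0, 0, 0, 0) ∧
      a₁ - b₁ = c₁ ∧ a₂ - b₂ = c₁ ∧ p * c₁ = a₁ + b₁ + a₂ + b₂ + c₁ ∧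
      -(a₁ * E₁) + b₁ * F₁ = c₂ ∧ -(a₂ * E₂) + b₂ * F₂ = c₂ ∧
      q * c₂ = a₁ * E₁ + b₁ * F₁ + a₂ * E₂ + b₂ * F₂ + c₂)
    ↔ (loopMatrix p q E₁ F₁ E₂ F₂).det = 0 := by
  rw [← Matrix.exists_mulVec_eq_zero_iff]
  constructor
  · rintro ⟨a₁, b₁, a₂, b₂, c₁, c₂, hne, h₁, h₂, h₃, h₄, h₅, h₆⟩
    refine ⟨![a₁, b₁, a₂, b₂], fun h => hne ?_, ?_⟩
    · simp only [Matrix.cons_eq_zero_iff] at h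
      obtain ⟨rfl, rfl, rfl, rfl, -⟩ := h
      subst h₁ h₄
      simp
    · simp only [loopMatrix_mulVec, Matrix.cons_val, Matrix.cons_eq_zero_iff]
      exact ⟨by linear_combination h₁ - h₂, by linear_combination (p - 1) * h₁ + h₃,
        by linear_combination h₄ - h₅, by linear_combination (q - 1) * h₄ + h₆, Subsingleton.elim _ _⟩
  · rintro ⟨v, hv, hMv⟩
    simp only [loopMatrix_mulVec, Matrix.cons_eq_zero_iff] at hMv
    obtain ⟨e₀, e₁, e₂, e₃, -⟩ := hMv
    refine ⟨v 0, v 1, v 2, v 3, v 0 - v 1, -(v 0 * E₁) + v 1 * F₁, fun h => hv ?_, rfl,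
      by linear_combination -e₀, by linear_combination e₁, rfl, by linear_combination -e₂,
      by linear_combination e₃⟩
    simp only [Prod.mk.injEq] at h
    obtain ⟨h₀, h₁, h₂, h₃, -⟩ := h
    ext i
    fin_cases i <;> assumption

end LoopMatrix

theorem det_loopMatrix_exp (p q k x₁ x₂ : ℂ) :
    (loopMatrix p q (exp (I * k * x₁)) (exp (-(I * k * x₁)))
        (exp (I * k * x₂)) (exp (-(I * k * x₂)))).det =
      4 * (I * (2 - p - q) * sin (k * (x₁ + x₂)) + 2 * (1 - cos (k * x₁) * cos (k * x₂))
        + (3 + p * q - p - q) * sin (k * x₁) * sin (k * x₂)) := by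
  have exp_pos (x : ℂ) : exp (I * k * x) = cos (k * x) + sin (k * x) * I := by
    rw [cos_add_sin_I]; ring_nf
  have exp_neg (x : ℂ) : exp (-(I * k * x)) = cos (k * x) - sin (k * x) * I := by
    rw [cos_sub_sin_I]; ring_nf
  rw [det_loopMatrix, exp_pos, exp_pos, exp_neg, exp_neg, mul_add k x₁ x₂, sin_add]
  linear_combination 4 * sin_sq_add_cos_sq (k * x₁) + 4 * sin_sq_add_cos_sq (k * x₂)
    - 4 * (sin (k * x₁) ^ 2 + sin (k * x₂) ^ 2
      + (3 + p * q - p - q) * sin (k * x₁) * sin (k * x₂)) * I_sq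

theorem stmt_15_general (ℓ₁ ℓ₂ : ℝ) (β₁ β₂ : ℝ) (k : ℂ) :
    (∃ a₁ b₁ a₂ b₂ c₁ c₂ : ℂ,
      (a₁, b₁, a₂, b₂, c₁, c₂) ≠ (0, 0, 0, 0, 0, 0) ∧
      a₁ - b₁ = c₁ ∧
      a₂ - b₂ = c₁ ∧
      Complex.I * k * β₁ * c₁ = a₁ + b₁ + a₂ + b₂ + c₁ ∧
      -(a₁ * Complex.exp (Complex.I * k * ℓ₁)) + b₁ * Complex.exp (-(Complex.I * k * ℓ₁))
        = c₂ ∧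
      -(a₂ * Complex.exp (Complex.I * k * ℓ₂)) + b₂ * Complex.exp (-(Complex.I * k * ℓ₂))
        = c₂ ∧
      Complex.I * k * β₂ * c₂
        = a₁ * Complex.exp (Complex.I * k * ℓ₁) + b₁ * Complex.exp (-(Complex.I * k * ℓ₁))
          + a₂ * Complex.exp (Complex.I * k * ℓ₂) + b₂ * Complex.exp (-(Complex.I * k * ℓ₂))
          + c₂)
    ↔ (((β₁ : ℂ) + β₂) * k + 2 * Complex.I) * Complex.sin (k * (ℓ₁ + ℓ₂))
      + 2 * (1 - Complex.cos (k * ℓ₁) * Complex.cos (k * ℓ₂))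
      + (3 - (β₁ : ℂ) * β₂ * k ^ 2 - Complex.I * k * ((β₁ : ℂ) + β₂))
        * Complex.sin (k * ℓ₁) * Complex.sin (k * ℓ₂) = 0 := by
  rw [exists_loop_solution_iff_det_loopMatrix_eq_zero, det_loopMatrix_exp, mul_eq_zero,
    or_iff_right (by norm_num)]
  apply Iff.of_eq
  congr 1
  linear_combination (k ^ 2 * β₁ * β₂ * sin (k * ℓ₁) * sin (k * ℓ₂)
    - k * (β₁ + β₂) * sin (k * (ℓ₁ + ℓ₂))) * I_sq

/-- Resonance condition for a loop of two edges of lengths `ℓ₁`, `ℓ₂` with one lead at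
each of the two vertices and `δ′_s`-couplings of strengths `β₁`, `β₂`: a nontrivial
generalized eigenfunction exists iff
`[(β₁+β₂)k + 2i] sin k(ℓ₁+ℓ₂) + 2(1 - cos kℓ₁ cos kℓ₂)
+ (3 - β₁β₂k² - ik(β₁+β₂)) sin kℓ₁ sin kℓ₂ = 0`. -/
theorem stmt_15 (ℓ₁ ℓ₂ : ℝ) (hℓ₁ : 0 < ℓ₁) (hℓ₂ : 0 < ℓ₂) (β₁ β₂ : ℝ) (k : ℂ)
    (hk : k ≠ 0) :
    (∃ a₁ b₁ a₂ b₂ c₁ c₂ : ℂ,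
      (a₁, b₁, a₂, b₂, c₁, c₂) ≠ (0, 0, 0, 0, 0, 0) ∧
      a₁ - b₁ = c₁ ∧
      a₂ - b₂ = c₁ ∧
      Complex.I * k * β₁ * c₁ = a₁ + b₁ + a₂ + b₂ + c₁ ∧
      -(a₁ * Complex.exp (Complex.I * k * ℓ₁)) + b₁ * Complex.exp (-(Complex.I * k * ℓ₁))
        = c₂ ∧
      -(a₂ * Complex.exp (Complex.I * k * ℓ₂)) + b₂ * Complex.exp (-(Complex.I * k * ℓ₂))
        = c₂ ∧
      Complex.I * k * β₂ * c₂
        = a₁ * Complex.exp (Complex.I * k * ℓ₁) + b₁ * Complex.exp (-(Complex.I * k * ℓ₁))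
          + a₂ * Complex.exp (Complex.I * k * ℓ₂) + b₂ * Complex.exp (-(Complex.I * k * ℓ₂))
          + c₂)
    ↔ (((β₁ : ℂ) + β₂) * k + 2 * Complex.I) * Complex.sin (k * (ℓ₁ + ℓ₂))
      + 2 * (1 - Complex.cos (k * ℓ₁) * Complex.cos (k * ℓ₂))
      + (3 - (β₁ : ℂ) * β₂ * k ^ 2 - Complex.I * k * ((β₁ : ℂ) + β₂))
        * Complex.sin (k * ℓ₁) * Complex.sin (k * ℓ₂) = 0 :=
  stmt_15_general ℓ₁ ℓ₂ β₁ β₂ k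
end
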